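/- arXiv:1205.0025 — 2 statements merged into one kernel-verified Lean document; each statement's English description precedes it below -/
import Mathlib

section
/- Let N ≅ ℤ^d be a lattice, 𝚺 = (Σ, {v_1,...,v_k}) a simplicial stacky fan in N, and β ∈ N ⊗ ℝ a real parameter. Then the R-module of Definition 1 (free abelian group on symbols [n+β] with n ∈ N and n+β in the support of Σ, with action [n']·[n+β] = [n'+n+β] if n' and n+β lie in a common cone and 0 otherwise) is isomorphic to the R-module ℤ[𝚺;β] of Definition 2 via the map [n+β] ↦ [n+β, α], where α = (α_i) is the unique element of Bx(𝚺;β) obtained by writing n+β = Σ_i q_i v_i with q_i ≥ 0 supported on the minimal cone containing n+β and setting α_i = {q_i} (fractional part). -/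
namespace GKZpaper

/-- The real cone spanned by the vectors `v i`, `i ∈ I`. -/
def realCone {d k : ℕ} (v : Fin k → Fin d → ℤ) (I : Finset (Fin k)) : Set (Fin d → ℝ) :=
  {x | ∃ c : Fin k → ℝ, (∀ i, 0 ≤ c i) ∧ (∀ i, i ∉ I → c i = 0) ∧
    ∀ j, x j = ∑ i, c i * (v i j : ℝ)}

/-- A (combinatorial model of a) rational simplicial fan together with the marked
lattice vectors `v i`; cones are recorded by the index sets of their generators. -/
structure StackyFan (d k : ℕ) where
  v : Fin k → Fin d → ℤ
  cones : Finset (Finset (Fin k))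
  empty_mem : ∅ ∈ cones
  downClosed : ∀ I ∈ cones, ∀ J ⊆ I, J ∈ cones
  simplicial : ∀ I ∈ cones,
    LinearIndependent ℝ (fun i : I => (fun j => (v i j : ℝ) : Fin d → ℝ))
  inter : ∀ I ∈ cones, ∀ J ∈ cones, realCone v I ∩ realCone v J = realCone v (I ∩ J)

variable {d k : ℕ}

/-- Every `v i` generates a ray of the fan. -/
def HasAllRays (F : StackyFan d k) : Prop := ∀ i, {i} ∈ F.cones

/-- The support of the fan. -/
def support (F : StackyFan d k) : Set (Fin d → ℝ) := ⋃ I ∈ F.cones, realCone F.v I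

/-- Maximal cones. -/
def IsMaxCone (F : StackyFan d k) (I : Finset (Fin k)) : Prop :=
  I ∈ F.cones ∧ ∀ J ∈ F.cones, I ⊆ J → J = I

def intPt {d : ℕ} (n : Fin d → ℤ) : Fin d → ℝ := fun j => (n j : ℝ)

/-- `Bx(σ;β)` for a complex parameter `β`: tuples `α` with `∑ αᵢ vᵢ ∈ N + β`,
`0 ≤ Re αᵢ < 1`, supported on `I`. -/
def BxCone (F : StackyFan d k) (β : Fin d → ℂ) (I : Finset (Fin k)) : Set (Fin k → ℂ) :=
  {α | (∀ i, 0 ≤ (α i).re ∧ (α i).re < 1) ∧ (∀ i, i ∉ I → α i = 0) ∧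
    ∃ n : Fin d → ℤ, ∀ j, ∑ i, α i * (F.v i j : ℂ) = (n j : ℂ) + β j}

/-- `Bx(𝚺;β)`: the union over the maximal cones. -/
def Bx (F : StackyFan d k) (β : Fin d → ℂ) : Set (Fin k → ℂ) :=
  {α | ∃ I, IsMaxCone F I ∧ α ∈ BxCone F β I}

/-- Real version of `Bx(σ;γ)`. -/
def BxConeR (F : StackyFan d k) (γ : Fin d → ℝ) (I : Finset (Fin k)) : Set (Fin k → ℝ) :=
  {a | (∀ i, 0 ≤ a i ∧ a i < 1) ∧ (∀ i, i ∉ I → a i = 0) ∧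
    ∃ n : Fin d → ℤ, ∀ j, ∑ i, a i * (F.v i j : ℝ) = (n j : ℝ) + γ j}

def BxR (F : StackyFan d k) (γ : Fin d → ℝ) : Set (Fin k → ℝ) :=
  {a | ∃ I, IsMaxCone F I ∧ a ∈ BxConeR F γ I}

/-- `Box(σ;γ) ⊂ N ⊗ ℝ` for a real parameter `γ`. -/
def BoxCone (F : StackyFan d k) (γ : Fin d → ℝ) (I : Finset (Fin k)) : Set (Fin d → ℝ) :=
  {c | (∃ n : Fin d → ℤ, ∀ j, c j = (n j : ℝ) + γ j) ∧
    ∃ a ∈ BxConeR F γ I, ∀ j, c j = ∑ i, a i * (F.v i j : ℝ)}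

def Box (F : StackyFan d k) (γ : Fin d → ℝ) : Set (Fin d → ℝ) :=
  {c | ∃ I, IsMaxCone F I ∧ c ∈ BoxCone F γ I}

/-- `I` is the minimal cone of the fan containing the point `x`. -/
def IsMinConeAt (F : StackyFan d k) (x : Fin d → ℝ) (I : Finset (Fin k)) : Prop :=
  I ∈ F.cones ∧ x ∈ realCone F.v I ∧ ∀ J ∈ F.cones, x ∈ realCone F.v J → I ⊆ J

/-- `w ∈ ∑ αᵢ vᵢ + ∑_{i ∈ I} ℤ₊ vᵢ`. -/
def shiftMem (F : StackyFan d k) (I : Finset (Fin k)) (α : Fin k → ℂ) (w : Fin d → ℂ) : Prop :=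
  ∃ m : Fin k → ℕ, (∀ i, i ∉ I → m i = 0) ∧
    ∀ j, w j = ∑ i, (α i + (m i : ℂ)) * (F.v i j : ℂ)

/-- Indexing set for the basis `[n+β, α]` of the deformed module `ℤ[𝚺;β]` (Definition 2). -/
def DefBasis (F : StackyFan d k) (β : Fin d → ℂ) : Set ((Fin d → ℂ) × (Fin k → ℂ)) :=
  {p | (∃ n : Fin d → ℤ, ∀ j, p.1 j = (n j : ℂ) + β j) ∧
    ∃ I, IsMaxCone F I ∧ p.2 ∈ BxCone F β I ∧ shiftMem F I p.2 p.1}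

/-- The defining condition for `[n'] ⬝ [n+β,α] = [n'+n+β,α']` via the maximal cone `I`. -/
def ActRelVia (F : StackyFan d k) (β : Fin d → ℂ) (I : Finset (Fin k)) (n' : Fin d → ℤ)
    (p p' : (Fin d → ℂ) × (Fin k → ℂ)) : Prop :=
  IsMaxCone F I ∧ intPt n' ∈ realCone F.v I ∧
    p.2 ∈ BxCone F β I ∧ shiftMem F I p.2 p.1 ∧
    p'.2 ∈ BxCone F β I ∧ shiftMem F I p'.2 p'.1 ∧
    ∀ j, p'.1 j = (n' j : ℂ) + p.1 j

/-- `[n'] ⬝ [n+β,α] = [n'+n+β,α']` (the product is nonzero with value `p'`). -/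
def ActRel (F : StackyFan d k) (β : Fin d → ℂ) (n' : Fin d → ℤ)
    (p p' : (Fin d → ℂ) × (Fin k → ℂ)) : Prop :=
  ∃ I, ActRelVia F β I n' p p'

/-- `Re β + δ Im β`, as a real vector. -/
def reDeform (β : Fin d → ℂ) (δ : ℝ) : Fin d → ℝ := fun j => (β j).re + δ * (β j).im

/-- `Re β + δ Im β`, regarded inside `N ⊗ ℂ`. -/
def reDeformC (β : Fin d → ℂ) (δ : ℝ) : Fin d → ℂ := fun j => ((β j).re + δ * (β j).im : ℝ)

end GKZpaper

namespace GKZpaper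

/-- Basis of the module of Definition 1 (real parameter `γ`): the points `n + γ`, `n ∈ N`,
lying in the support of the fan. -/
def Def1Basis {d k : ℕ} (F : StackyFan d k) (γ : Fin d → ℝ) : Set (Fin d → ℝ) :=
  {w | (∃ n : Fin d → ℤ, ∀ j, w j = (n j : ℝ) + γ j) ∧ w ∈ support F}

/-- The action `[n'] ⬝ [n+γ] = [n'+n+γ]` of Definition 1: nonzero exactly when `n'` and
`n+γ` lie in a common cone of the fan. -/
def ActRel1 {d k : ℕ} (F : StackyFan d k) (n' : Fin d → ℤ) (w w' : Fin d → ℝ) : Prop :=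
  (∃ I ∈ F.cones, intPt n' ∈ realCone F.v I ∧ w ∈ realCone F.v I) ∧
    ∀ j, w' j = (n' j : ℝ) + w j


section Helpers

lemma realCone_mono (v : Fin k → Fin d → ℤ) {I J : Finset (Fin k)} (h : I ⊆ J) :
    realCone v I ⊆ realCone v J := by
  rintro x ⟨c, h0, hs, hx⟩
  exact ⟨c, h0, fun i hi => hs i (fun hI => hi (h hI)), hx⟩

lemma exists_minCone (F : StackyFan d k) {w : Fin d → ℝ} (hw : w ∈ support F) :
    ∃ I, IsMinConeAt F w I := by
  classical
  set S := F.cones.filter (fun I => w ∈ realCone F.v I) with hS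
  have hne : S.Nonempty := by
    simp only [support, Set.mem_iUnion] at hw
    obtain ⟨I, hI, hwI⟩ := hw
    exact ⟨I, Finset.mem_filter.mpr ⟨hI, hwI⟩⟩
  obtain ⟨I, hIS, hmin⟩ := S.exists_min_image Finset.card hne
  rw [hS, Finset.mem_filter] at hIS
  refine ⟨I, hIS.1, hIS.2, ?_⟩
  intro J hJ hwJ
  have hK : I ∩ J ∈ F.cones := F.downClosed I hIS.1 _ Finset.inter_subset_left
  have hwK : w ∈ realCone F.v (I ∩ J) := by
    rw [← F.inter I hIS.1 J hJ]; exact ⟨hIS.2, hwJ⟩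
  have hcard := hmin (I ∩ J) (by rw [hS, Finset.mem_filter]; exact ⟨hK, hwK⟩)
  have heq : I ∩ J = I :=
    Finset.eq_of_subset_of_card_le Finset.inter_subset_left hcard
  intro i hi
  have : i ∈ I ∩ J := heq.symm ▸ hi
  exact (Finset.mem_inter.mp this).2

lemma exists_maxCone (F : StackyFan d k) {I : Finset (Fin k)} (hI : I ∈ F.cones) :
    ∃ I', I ⊆ I' ∧ IsMaxCone F I' := by
  classical
  set S := F.cones.filter (fun J => I ⊆ J) with hS
  have hne : S.Nonempty := ⟨I, by rw [hS, Finset.mem_filter]; exact ⟨hI, subset_rfl⟩⟩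
  obtain ⟨M, hMS, hmax⟩ := S.exists_max_image Finset.card hne
  rw [hS, Finset.mem_filter] at hMS
  refine ⟨M, hMS.2, hMS.1, ?_⟩
  intro J hJ hMJ
  have hJS : J ∈ S := by rw [hS, Finset.mem_filter]; exact ⟨hJ, hMS.2.trans hMJ⟩
  exact (Finset.eq_of_subset_of_card_le hMJ (hmax J hJS)).symm

lemma coeff_unique (F : StackyFan d k) {I : Finset (Fin k)} (hI : I ∈ F.cones)
    {c c' : Fin k → ℝ} (hc : ∀ i, i ∉ I → c i = 0) (hc' : ∀ i, i ∉ I → c' i = 0)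
    (h : ∀ j, ∑ i, c i * (F.v i j : ℝ) = ∑ i, c' i * (F.v i j : ℝ)) : c = c' := by
  classical
  have hli := F.simplicial I hI
  rw [Fintype.linearIndependent_iff] at hli
  have key := hli (fun i => c i - c' i) ?_
  · funext i
    by_cases hi : i ∈ I
    · have := key ⟨i, hi⟩
      simpa [sub_eq_zero] using this
    · rw [hc i hi, hc' i hi]
  · funext j
    have h1 : (∑ i : I, ((c i - c' i) • (fun j => (F.v i j : ℝ)))) j
        = ∑ i : I, (c (i : Fin k) - c' (i : Fin k)) * (F.v (i : Fin k) j : ℝ) := by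
      simp [Finset.sum_apply]
    have h2 : ∑ i : I, (c (i : Fin k) - c' (i : Fin k)) * (F.v (i : Fin k) j : ℝ)
        = ∑ i ∈ I, (c i - c' i) * (F.v i j : ℝ) :=
      Finset.sum_coe_sort I (fun i => (c i - c' i) * (F.v i j : ℝ))
    have h3 : ∑ i ∈ I, (c i - c' i) * (F.v i j : ℝ)
        = ∑ i, (c i - c' i) * (F.v i j : ℝ) := by
      apply Finset.sum_subset (Finset.subset_univ I)
      intro x _ hx
      rw [hc x hx, hc' x hx]; ring
    have h4 : ∑ i, (c i - c' i) * (F.v i j : ℝ) = 0 := by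
      simp only [sub_mul, Finset.sum_sub_distrib, h j, sub_self]
    simp only [Pi.zero_apply]
    rw [h1, h2, h3, h4]

lemma exists_minData (F : StackyFan d k) {w : Fin d → ℝ} (hw : w ∈ support F) :
    ∃ (I : Finset (Fin k)) (q : Fin k → ℝ), IsMinConeAt F w I ∧ (∀ i, 0 ≤ q i) ∧ (∀ i, i ∉ I → q i = 0) ∧
      ∀ j, w j = ∑ i, q i * (F.v i j : ℝ) := by
  obtain ⟨I, hmin⟩ := exists_minCone F hw
  obtain ⟨q, hq0, hqs, hwq⟩ := hmin.2.1
  exact ⟨I, q, hmin, hq0, hqs, hwq⟩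

/-- The box data attached to a nonnegative representation supported in a subcone. -/
lemma boxData (F : StackyFan d k) (γ : Fin d → ℝ) {w : Fin d → ℝ} {n : Fin d → ℤ}
    (hwn : ∀ j, w j = (n j : ℝ) + γ j)
    {q : Fin k → ℝ} (hq0 : ∀ i, 0 ≤ q i) {Im I : Finset (Fin k)} (hII : Im ⊆ I)
    (hqs : ∀ i, i ∉ Im → q i = 0)
    (hwq : ∀ j, w j = ∑ i, q i * (F.v i j : ℝ)) :
    (fun i => ((Int.fract (q i) : ℝ) : ℂ)) ∈ BxCone F (fun j => (γ j : ℂ)) I ∧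
    shiftMem F I (fun i => ((Int.fract (q i) : ℝ) : ℂ)) (fun j => (w j : ℂ)) := by
  have hqI : ∀ i, i ∉ I → q i = 0 := fun i hi => hqs i (fun h => hi (hII h))
  have hfloor : ∀ i, (0 : ℤ) ≤ ⌊q i⌋ := fun i => Int.floor_nonneg.mpr (hq0 i)
  have hsumR : ∀ j, ∑ i, Int.fract (q i) * (F.v i j : ℝ)
      = ((n j - ∑ i, ⌊q i⌋ * F.v i j : ℤ) : ℝ) + γ j := by
    intro j
    have : ∑ i, Int.fract (q i) * (F.v i j : ℝ)
        = ∑ i, q i * (F.v i j : ℝ) - ∑ i, (⌊q i⌋ : ℝ) * (F.v i j : ℝ) := by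
      rw [← Finset.sum_sub_distrib]
      refine Finset.sum_congr rfl fun i _ => ?_
      rw [show Int.fract (q i) = q i - (⌊q i⌋ : ℝ) from (Int.self_sub_floor (q i)).symm]
      ring
    rw [this, ← hwq j, hwn j]
    push_cast
    ring
  constructor
  · refine ⟨fun i => ?_, fun i hi => ?_, fun j => n j - ∑ i, ⌊q i⌋ * F.v i j, fun j => ?_⟩
    · simp [Int.fract_nonneg, Int.fract_lt_one]
    · simp [hqI i hi]
    · have := hsumR j
      have hc : ((∑ i, Int.fract (q i) * (F.v i j : ℝ) : ℝ) : ℂ)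
          = ∑ i, ((Int.fract (q i) : ℝ) : ℂ) * ((F.v i j : ℤ) : ℂ) := by
        push_cast; ring
      rw [← hc, this]
      push_cast; ring
  · refine ⟨fun i => (⌊q i⌋).toNat, fun i hi => ?_, fun j => ?_⟩
    · simp [hqI i hi]
    · have hre : ∀ i, Int.fract (q i) + ((⌊q i⌋).toNat : ℝ) = q i := by
        intro i
        have h1 : (((⌊q i⌋).toNat : ℤ) : ℝ) = ((⌊q i⌋ : ℤ) : ℝ) := by
          exact_mod_cast congrArg (fun z : ℤ => (z : ℝ)) (Int.toNat_of_nonneg (hfloor i))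
        push_cast at h1
        rw [h1]
        exact Int.fract_add_floor (q i)
      have : (w j : ℂ) = ((∑ i, q i * (F.v i j : ℝ) : ℝ) : ℂ) := by rw [← hwq j]
      beta_reduce
      rw [this]
      push_cast
      refine Finset.sum_congr rfl fun i _ => ?_
      have h2 : ((Int.fract (q i) : ℝ) : ℂ) + (((⌊q i⌋).toNat : ℕ) : ℂ) = ((q i : ℝ) : ℂ) := by
        exact_mod_cast congrArg (fun r : ℝ => (r : ℂ)) (hre i)
      rw [← h2]

lemma im_zero_of_bx (F : StackyFan d k) (γ : Fin d → ℝ) {α : Fin k → ℂ} {I : Finset (Fin k)}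
    (hI : I ∈ F.cones) (hbx : α ∈ BxCone F (fun j => (γ j : ℂ)) I) :
    ∀ i, (α i).im = 0 := by
  obtain ⟨h01, hsupp, n, hsum⟩ := hbx
  have key : (fun i => (α i).im) = (fun _ => (0:ℝ)) := by
    apply coeff_unique F hI
    · intro i hi; rw [hsupp i hi]; simp
    · intro i _; rfl
    · intro j
      have h := congrArg Complex.im (hsum j)
      rw [Complex.im_sum] at h
      simp only [Complex.add_im, Complex.intCast_im, Complex.ofReal_im, add_zero,
        Complex.mul_im, Complex.intCast_re, zero_mul, zero_add, mul_zero] at h ⊢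
      rw [h]
      simp
  exact fun i => congrFun key i

/-- From box data over `I`, the real point lies in `realCone I` with the natural
coefficients. -/
lemma realCone_of_box (F : StackyFan d k) (γ : Fin d → ℝ)
    {p : (Fin d → ℂ) × (Fin k → ℂ)} {I : Finset (Fin k)} {m : Fin k → ℕ}
    (hI : I ∈ F.cones) (hbx : p.2 ∈ BxCone F (fun j => (γ j : ℂ)) I)
    (hm0 : ∀ i, i ∉ I → m i = 0)
    (hmw : ∀ j, p.1 j = ∑ i, (p.2 i + (m i : ℂ)) * (F.v i j : ℂ)) :
    (∀ i, 0 ≤ (p.2 i).re + (m i : ℝ)) ∧ (∀ i, i ∉ I → (p.2 i).re + (m i : ℝ) = 0) ∧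
      ∀ j, (p.1 j).re = ∑ i, ((p.2 i).re + (m i : ℝ)) * (F.v i j : ℝ) := by
  have him := im_zero_of_bx F γ hI hbx
  refine ⟨fun i => add_nonneg (hbx.1 i).1 (Nat.cast_nonneg _), fun i hi => ?_, fun j => ?_⟩
  · rw [hbx.2.1 i hi, hm0 i hi]; simp
  · have h := congrArg Complex.re (hmw j)
    rw [Complex.re_sum] at h
    simp only [Complex.mul_re, Complex.add_re, Complex.add_im, Complex.natCast_re,
      Complex.natCast_im, Complex.intCast_re, Complex.intCast_im, him, add_zero,
      zero_add, mul_zero, sub_zero] at h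
    exact h

lemma bx_unique (F : StackyFan d k) (γ : Fin d → ℝ)
    {p : (Fin d → ℂ) × (Fin k → ℂ)} (hp : p ∈ DefBasis F (fun j => (γ j : ℂ)))
    {w : Fin d → ℝ} (hpw : ∀ j, p.1 j = (w j : ℂ))
    {Im : Finset (Fin k)} {q : Fin k → ℝ} (hmin : IsMinConeAt F w Im)
    (hqs : ∀ i, i ∉ Im → q i = 0)
    (hwq : ∀ j, w j = ∑ i, q i * (F.v i j : ℝ)) :
    ∀ i, p.2 i = ((Int.fract (q i) : ℝ) : ℂ) := by
  obtain ⟨-, I, hImax, hbx, m, hm0, hmw⟩ := hp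
  obtain ⟨hc0, hcsupp, hrep⟩ := realCone_of_box F γ hImax.1 hbx hm0 hmw
  have him := im_zero_of_bx F γ hImax.1 hbx
  have hwrep : ∀ j, w j = ∑ i, ((p.2 i).re + (m i : ℝ)) * (F.v i j : ℝ) := by
    intro j
    have : (p.1 j).re = w j := by rw [hpw j]; simp
    rw [← this, hrep j]
  have hwI : w ∈ realCone F.v I := ⟨_, hc0, hcsupp, hwrep⟩
  have hImI : Im ⊆ I := hmin.2.2 I hImax.1 hwI
  have hqI : ∀ i, i ∉ I → q i = 0 := fun i hi => hqs i (fun h => hi (hImI h))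
  have hqc : q = fun i => (p.2 i).re + (m i : ℝ) :=
    coeff_unique F hImax.1 hqI hcsupp (fun j => (hwq j).symm.trans (hwrep j))
  intro i
  have h1 : Int.fract (q i) = (p.2 i).re := by
    rw [congrFun hqc i, Int.fract_add_natCast]
    exact Int.fract_eq_self.mpr ⟨(hbx.1 i).1, (hbx.1 i).2⟩
  apply Complex.ext
  · simp [h1]
  · simp [him i]

lemma defBasis_real (F : StackyFan d k) (γ : Fin d → ℝ)
    {p : (Fin d → ℂ) × (Fin k → ℂ)} (hp : p ∈ DefBasis F (fun j => (γ j : ℂ))) :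
    ∃ w : Fin d → ℝ, (∀ j, p.1 j = (w j : ℂ)) ∧ w ∈ Def1Basis F γ := by
  obtain ⟨⟨n, hn⟩, I, hImax, hbx, m, hm0, hmw⟩ := hp
  obtain ⟨hc0, hcsupp, hrep⟩ := realCone_of_box F γ hImax.1 hbx hm0 hmw
  refine ⟨fun j => (p.1 j).re, fun j => ?_, ⟨n, fun j => ?_⟩, ?_⟩
  · show p.1 j = ((p.1 j).re : ℂ)
    rw [hn j]; simp
  · show (p.1 j).re = (n j : ℝ) + γ j
    rw [hn j]; simp
  · exact Set.mem_biUnion hImax.1 ⟨_, hc0, hcsupp, hrep⟩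

end Helpers

/-- **Remark 2.4.** For a real parameter `γ ∈ N ⊗ ℝ`, the `R`-module of Definition 1 is
identified with the `R`-module `ℤ[𝚺;γ]` of Definition 2 under `[n+γ] ↦ [n+γ, α]`, where `α`
is obtained by writing `n+γ = ∑ qᵢ vᵢ` over the minimal cone containing `n+γ` and taking
`αᵢ = {qᵢ}`.  This bijection of bases intertwines the two module structures. -/
theorem statement4 {d k : ℕ} (F : StackyFan d k) (hrays : HasAllRays F) (γ : Fin d → ℝ) :
    ∃ e : ↥(Def1Basis F γ) ≃ ↥(DefBasis F (fun j => (γ j : ℂ))),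
      (∀ w : ↥(Def1Basis F γ),
        (∀ j, ((e w : (Fin d → ℂ) × (Fin k → ℂ)).1 j) = (((w : Fin d → ℝ) j : ℝ) : ℂ)) ∧
        ∃ I : Finset (Fin k), IsMinConeAt F (w : Fin d → ℝ) I ∧
          ∃ q : Fin k → ℝ, (∀ i, 0 ≤ q i) ∧ (∀ i, i ∉ I → q i = 0) ∧
            (∀ j, (w : Fin d → ℝ) j = ∑ i, q i * (F.v i j : ℝ)) ∧
            ∀ i, (e w : (Fin d → ℂ) × (Fin k → ℂ)).2 i = ((Int.fract (q i) : ℝ) : ℂ)) ∧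
      (∀ (n' : Fin d → ℤ) (w w' : ↥(Def1Basis F γ)),
        ActRel1 F n' (w : Fin d → ℝ) (w' : Fin d → ℝ) ↔
        ActRel F (fun j => (γ j : ℂ)) n' (e w : (Fin d → ℂ) × (Fin k → ℂ))
          (e w' : (Fin d → ℂ) × (Fin k → ℂ))) := by
  classical
  set β : Fin d → ℂ := fun j => (γ j : ℂ) with hβ
  have hdata : ∀ w : ↥(Def1Basis F γ), ∃ (I : Finset (Fin k)) (q : Fin k → ℝ),
      IsMinConeAt F (w : Fin d → ℝ) I ∧ (∀ i, 0 ≤ q i) ∧ (∀ i, i ∉ I → q i = 0) ∧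
      ∀ j, (w : Fin d → ℝ) j = ∑ i, q i * (F.v i j : ℝ) :=
    fun w => exists_minData F w.2.2
  choose Im q hmin hq0 hqs hwq using hdata
  have hmem : ∀ w : ↥(Def1Basis F γ),
      ((fun j => (((w : Fin d → ℝ)) j : ℂ)), fun i => ((Int.fract (q w i) : ℝ) : ℂ))
        ∈ DefBasis F β := by
    intro w
    obtain ⟨n, hn⟩ := w.2.1
    obtain ⟨I, hII, hImax⟩ := exists_maxCone F (hmin w).1
    obtain ⟨hbx, hsh⟩ := boxData F γ hn (hq0 w) hII (hqs w) (hwq w)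
    refine ⟨⟨n, fun j => ?_⟩, I, hImax, hbx, hsh⟩
    show (((w : Fin d → ℝ)) j : ℂ) = (n j : ℂ) + (γ j : ℂ)
    rw [hn j]; push_cast; ring
  set f : ↥(Def1Basis F γ) → ↥(DefBasis F β) := fun w => ⟨_, hmem w⟩ with hf
  have hbij : Function.Bijective f := by
    constructor
    · intro w w' h
      have h1 : (fun j => (((w : Fin d → ℝ)) j : ℂ)) = (fun j => (((w' : Fin d → ℝ)) j : ℂ)) :=
        congrArg (fun p : ↥(DefBasis F β) => (p : (Fin d → ℂ) × (Fin k → ℂ)).1) h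
      apply Subtype.ext
      funext j
      have := congrFun h1 j
      exact_mod_cast this
    · intro p
      obtain ⟨w, hpw, hw⟩ := defBasis_real F γ p.prop
      refine ⟨⟨w, hw⟩, ?_⟩
      apply Subtype.ext
      apply Prod.ext
      · funext j; exact (hpw j).symm
      · funext i
        exact (bx_unique F γ p.prop hpw (hmin ⟨w, hw⟩) (hqs ⟨w, hw⟩) (hwq ⟨w, hw⟩) i).symm
  refine ⟨Equiv.ofBijective f hbij, fun w =>
    ⟨fun j => rfl, Im w, hmin w, q w, hq0 w, hqs w, hwq w, fun i => rfl⟩, ?_⟩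
  intro n' w w'
  constructor
  · rintro ⟨⟨J, hJ, hn'J, hwJ⟩, hww'⟩
    obtain ⟨I, hJI, hImax⟩ := exists_maxCone F hJ
    obtain ⟨nw, hnw⟩ := w.2.1
    obtain ⟨nw', hnw'⟩ := w'.2.1
    have hImJ : Im w ⊆ J := (hmin w).2.2 J hJ hwJ
    have hw'J : (w' : Fin d → ℝ) ∈ realCone F.v J := by
      obtain ⟨c1, hc10, hc1s, hc1⟩ := hn'J
      obtain ⟨c2, hc20, hc2s, hc2⟩ := hwJ
      refine ⟨fun i => c1 i + c2 i, fun i => add_nonneg (hc10 i) (hc20 i),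
        fun i hi => by show c1 i + c2 i = 0; rw [hc1s i hi, hc2s i hi]; ring, fun j => ?_⟩
      have h1 : (n' j : ℝ) = ∑ i, c1 i * (F.v i j : ℝ) := hc1 j
      rw [hww' j, h1, hc2 j, ← Finset.sum_add_distrib]
      exact Finset.sum_congr rfl fun i _ => by ring
    have hIm'J : Im w' ⊆ J := (hmin w').2.2 J hJ hw'J
    obtain ⟨hbx1, hsh1⟩ := boxData F γ hnw (hq0 w) (hImJ.trans hJI) (hqs w) (hwq w)
    obtain ⟨hbx2, hsh2⟩ := boxData F γ hnw' (hq0 w') (hIm'J.trans hJI) (hqs w') (hwq w')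
    refine ⟨I, hImax, realCone_mono F.v hJI hn'J, hbx1, hsh1, hbx2, hsh2, fun j => ?_⟩
    show (((w' : Fin d → ℝ)) j : ℂ) = (n' j : ℂ) + (((w : Fin d → ℝ)) j : ℂ)
    rw [hww' j]; push_cast; ring
  · rintro ⟨I, hImax, hn'I, hbx1, hsh1, hbx2, hsh2, heq⟩
    have hbx1' : (fun i => ((Int.fract (q w i) : ℝ) : ℂ)) ∈ BxCone F (fun j => (γ j : ℂ)) I :=
      hbx1
    have hsh1' : shiftMem F I (fun i => ((Int.fract (q w i) : ℝ) : ℂ))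
        (fun j => (((w : Fin d → ℝ)) j : ℂ)) := hsh1
    constructor
    · refine ⟨I, hImax.1, hn'I, ?_⟩
      obtain ⟨m, hm0, hmw⟩ := hsh1'
      obtain ⟨hc0, hcs, hrep⟩ := realCone_of_box F γ (p := ((fun j => (((w : Fin d → ℝ)) j : ℂ)),
        fun i => ((Int.fract (q w i) : ℝ) : ℂ))) hImax.1 hbx1' hm0 hmw
      refine ⟨_, hc0, hcs, fun j => ?_⟩
      have h2 := hrep j
      simpa using h2
    · intro j
      have h2 : (((w' : Fin d → ℝ)) j : ℂ) = (n' j : ℂ) + (((w : Fin d → ℝ)) j : ℂ) := heq j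
      exact_mod_cast h2


end GKZpaper
end

section
/- Let N ≅ ℤ^d be a lattice, 𝚺 = (Σ, {v_1,...,v_k}) a simplicial stacky fan in N, and β ∈ N ⊗ ℂ. The deformed Grothendieck ring Kℂ(𝚺;β) is Artinian, and its maximal ideals are in one-to-one correspondence with the elements of Bx(𝚺;β) ⊂ ℂ^k: the element α = (α_i) ∈ Bx(𝚺;β) corresponds to the maximal ideal determined by the point y = (y_i) ∈ (ℂ*)^k with y_i = e^{2π√−1 α_i}. -/
namespace GKZpaper

open Complex

/-- The Laurent polynomial ring `ℂ[R₁^{±1},…,R_k^{±1}]`, realized as the group algebra of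
`ℤᵏ` over `ℂ`. -/
abbrev Laur (k : ℕ) := AddMonoidAlgebra ℂ (Fin k →₀ ℤ)

/-- The Laurent monomial `∏ Rᵢ^{mᵢ}`. -/
noncomputable def Rmon {k : ℕ} (m : Fin k →₀ ℤ) : Laur k := AddMonoidAlgebra.single m 1

/-- The variable `Rᵢ`. -/
noncomputable def Rvar {k : ℕ} (i : Fin k) : Laur k := Rmon (Finsupp.single i 1)

/-- The ideal `U`, generated by `∏_{i ∈ I} (1 - Rᵢ)` over all index sets `I` such that the
`vᵢ`, `i ∈ I`, do not generate a cone of `Σ`. -/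
noncomputable def Uideal {k : ℕ} (cones : Finset (Finset (Fin k))) : Ideal (Laur k) :=
  Ideal.span {p | ∃ I : Finset (Fin k), I ∉ cones ∧ p = ∏ i ∈ I, (1 - Rvar i)}

/-- The value `f(β)` for a linear `f : N → ℤ` and `β ∈ N ⊗ ℂ`. -/
noncomputable def fval {d : ℕ} (f : (Fin d → ℤ) →ₗ[ℤ] ℤ) (β : Fin d → ℂ) : ℂ :=
  ∑ j, β j * (f (Pi.single j 1) : ℂ)

/-- The ideal `V`, generated by `∏ᵢ Rᵢ^{f(vᵢ)} - e^{2π√-1 f(β)}` over all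
linear functions `f : N → ℤ`. -/
noncomputable def Videal {d k : ℕ} (v : Fin k → Fin d → ℤ) (β : Fin d → ℂ) :
    Ideal (Laur k) :=
  Ideal.span {p | ∃ f : (Fin d → ℤ) →ₗ[ℤ] ℤ,
    p = Rmon (Finsupp.equivFunOnFinite.symm fun i => f (v i)) -
      algebraMap ℂ (Laur k) (Complex.exp (2 * Real.pi * Complex.I * fval f β))}

/-- The deformed Grothendieck ring `Kℂ(𝚺;β)` (Definition 3.1). -/
noncomputable def Kring {d k : ℕ} (v : Fin k → Fin d → ℤ) (cones : Finset (Finset (Fin k)))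
    (β : Fin d → ℂ) : Type :=
  Laur k ⧸ (Uideal cones ⊔ Videal v β)

noncomputable instance {d k : ℕ} (v : Fin k → Fin d → ℤ) (cones : Finset (Finset (Fin k)))
    (β : Fin d → ℂ) : CommRing (Kring v cones β) :=
  Ideal.Quotient.commRing _

noncomputable instance {d k : ℕ} (v : Fin k → Fin d → ℤ) (cones : Finset (Finset (Fin k)))
    (β : Fin d → ℂ) : Algebra ℂ (Kring v cones β) :=
  Ideal.Quotient.algebra ℂ

/-- Evaluation of Laurent monomials at a point `y ∈ (ℂ*)ᵏ`, as a monoid homomorphism. -/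
noncomputable def evalMonoid {k : ℕ} (y : Fin k → ℂˣ) :
    Multiplicative (Fin k →₀ ℤ) →* ℂˣ where
  toFun m := ∏ i, y i ^ ((Multiplicative.toAdd m) i)
  map_one' := by simp
  map_mul' a b := by
    simp [zpow_add, Finset.prod_mul_distrib]

/-- Evaluation of Laurent polynomials at a point `y ∈ (ℂ*)ᵏ`. -/
noncomputable def evalAt {k : ℕ} (y : Fin k → ℂˣ) : Laur k →ₐ[ℂ] ℂ :=
  AddMonoidAlgebra.lift ℂ ℂ (Fin k →₀ ℤ) ((Units.coeHom ℂ).comp (evalMonoid y))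

/-- The point `y = (e^{2π√-1 αᵢ})ᵢ ∈ (ℂ*)ᵏ` attached to `α ∈ ℂᵏ`. -/
noncomputable def ypoint {k : ℕ} (α : Fin k → ℂ) : Fin k → ℂˣ := fun i =>
  Units.mk0 (Complex.exp (2 * Real.pi * Complex.I * α i)) (Complex.exp_ne_zero _)

/-- The maximal ideal of `Kℂ(𝚺;β)` determined by the point
`y = (e^{2π√-1 αᵢ})ᵢ ∈ (ℂ*)ᵏ`: the image of the ideal of Laurent polynomials
vanishing at `y`. -/
noncomputable def maxIdl {d k : ℕ} (v : Fin k → Fin d → ℤ) (cones : Finset (Finset (Fin k)))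
    (β : Fin d → ℂ) (α : Fin k → ℂ) : Ideal (Kring v cones β) :=
  Ideal.map (Ideal.Quotient.mk (Uideal cones ⊔ Videal v β))
    (RingHom.ker (evalAt (ypoint α)).toRingHom)

end GKZpaper

namespace GKZpaper

section Eval
open Complex AddMonoidAlgebra
variable {d k : ℕ}

lemma evalAt_single (y : Fin k → ℂˣ) (m : Fin k →₀ ℤ) (c : ℂ) :
    evalAt y (AddMonoidAlgebra.single m c) = c * ∏ i, (y i : ℂ) ^ (m i) := by
  simp only [evalAt, AddMonoidAlgebra.lift_single]
  simp only [smul_eq_mul]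
  congr 1
  simp only [RingHom.coe_comp, MonoidHom.coe_comp, Function.comp_apply]
  simp only [evalMonoid, MonoidHom.coe_mk, OneHom.coe_mk]
  rw [map_prod]
  exact Finset.prod_congr rfl fun i _ => by simp

lemma evalAt_Rmon (y : Fin k → ℂˣ) (m : Fin k →₀ ℤ) :
    evalAt y (Rmon m) = ∏ i, (y i : ℂ) ^ (m i) := by
  rw [Rmon, evalAt_single, one_mul]

lemma evalAt_Rvar (y : Fin k → ℂˣ) (i : Fin k) :
    evalAt y (Rvar i) = y i := by
  rw [Rvar, evalAt_Rmon]
  rw [Fintype.prod_eq_single i (fun j hj => by simp [Finsupp.single_apply, (Ne.symm hj)])]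
  simp

end Eval
section Homs
open Complex
variable {d k : ℕ}

lemma Rmon_mul (a b : Fin k →₀ ℤ) : Rmon a * Rmon b = Rmon (a + b) := by
  simp [Rmon, AddMonoidAlgebra.single_mul_single]

lemma Rmon_zero : Rmon (0 : Fin k →₀ ℤ) = 1 := rfl

lemma phi_unit (φ : Laur k →ₐ[ℂ] ℂ) (m : Fin k →₀ ℤ) : IsUnit (φ (Rmon m)) := by
  refine IsUnit.of_mul_eq_one (φ (Rmon (-m))) ?_
  rw [← map_mul, Rmon_mul, add_neg_cancel, Rmon_zero, map_one]

lemma phi_Rmon_single (φ : Laur k →ₐ[ℂ] ℂ) (i : Fin k) (n : ℤ) :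
    φ (Rmon (Finsupp.single i n)) = φ (Rmon (Finsupp.single i 1)) ^ n := by
  have h0 : φ (Rmon (Finsupp.single i 1)) ≠ 0 := (phi_unit φ _).ne_zero
  have hadd : ∀ a b : ℤ, φ (Rmon (Finsupp.single i (a + b)))
      = φ (Rmon (Finsupp.single i a)) * φ (Rmon (Finsupp.single i b)) := by
    intro a b
    rw [Finsupp.single_add, ← Rmon_mul, map_mul]
  have hmul1 : φ (Rmon (Finsupp.single i 1)) * φ (Rmon (Finsupp.single i (-1))) = 1 := by
    rw [← map_mul, Rmon_mul, ← Finsupp.single_add]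
    norm_num [Rmon_zero]
  have hneg : φ (Rmon (Finsupp.single i (-1))) = (φ (Rmon (Finsupp.single i 1)))⁻¹ :=
    (inv_eq_of_mul_eq_one_right hmul1).symm
  induction n using Int.induction_on with
  | zero => simp [Finsupp.single_zero, Rmon_zero]
  | succ n ih => rw [hadd n 1, ih, zpow_add₀ h0, zpow_one]
  | pred n ih =>
      have e : (-(n:ℤ) - 1) = (-(n:ℤ)) + (-1) := by ring
      rw [e, hadd, ih, hneg, zpow_add₀ h0, zpow_neg_one]

lemma exists_evalAt (φ : Laur k →ₐ[ℂ] ℂ) : ∃ y : Fin k → ℂˣ, φ = evalAt y := by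
  refine ⟨fun i => (phi_unit φ (Finsupp.single i 1)).unit, ?_⟩
  apply AddMonoidAlgebra.algHom_ext
  intro m
  have key : ∀ m : Fin k →₀ ℤ, φ (Rmon m) = ∏ i, φ (Rmon (Finsupp.single i 1)) ^ (m i) := by
    intro m
    induction m using Finsupp.induction_linear with
    | zero => simp [Rmon_zero]
    | add a b ha hb =>
        rw [← Rmon_mul, map_mul, ha, hb, ← Finset.prod_mul_distrib]
        refine Finset.prod_congr rfl fun i _ => ?_
        rw [← zpow_add₀ (phi_unit φ _).ne_zero]
        rfl
    | single a b =>
        rw [phi_Rmon_single]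
        rw [Fintype.prod_eq_single a (fun j hj => by
          simp [Finsupp.single_apply, (Ne.symm hj)])]
        simp [Finsupp.single_apply]
  have : (AddMonoidAlgebra.single m 1 : Laur k) = Rmon m := rfl
  rw [this, key m, evalAt_Rmon]
  exact Finset.prod_congr rfl fun i _ => by rw [IsUnit.unit_spec]
  exact Subsingleton.elim _ _

end Homs
section AlphaY
open Complex
variable {d k : ℕ}

lemma twoPiI_ne_zero : (2 * (Real.pi:ℂ) * I) ≠ 0 := by
  simp [Real.pi_ne_zero, Complex.I_ne_zero]

lemma exp_two_pi_int (n : ℤ) : Complex.exp (2 * (Real.pi:ℂ) * I * n) = 1 := by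
  have : (2 * (Real.pi:ℂ) * I * n) = n * (2 * (Real.pi:ℂ) * I) := by ring
  rw [this, Complex.exp_int_mul, Complex.exp_two_pi_mul_I, one_zpow]

lemma alpha_unique {a b : ℂ} (ha0 : 0 ≤ a.re) (ha1 : a.re < 1) (hb0 : 0 ≤ b.re)
    (hb1 : b.re < 1) (h : Complex.exp (2 * (Real.pi:ℂ) * I * a) = Complex.exp (2 * (Real.pi:ℂ) * I * b)) :
    a = b := by
  rw [Complex.exp_eq_exp_iff_exists_int] at h
  obtain ⟨n, hn⟩ := h
  have h2 : 2 * (Real.pi:ℂ) * I * a = 2 * (Real.pi:ℂ) * I * (b + n) := by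
    rw [hn]; ring
  have hab : a = b + n := mul_left_cancel₀ twoPiI_ne_zero h2
  have hre : a.re = b.re + n := by rw [hab]; simp
  have : n = 0 := by
    have h1 : (n:ℝ) < 1 := by
      have := hb0; nlinarith
    have h2 : (-1:ℝ) < n := by nlinarith
    have : (n:ℤ) < 1 := by exact_mod_cast h1
    have : (-1:ℤ) < n := by exact_mod_cast h2
    omega
  rw [hab, this]; simp

/-- The canonical logarithm with real part in `[0,1)`. -/
noncomputable def alphaOf (y : ℂˣ) : ℂ :=
  (↑((y:ℂ).arg / (2*Real.pi) + (if (y:ℂ).arg < 0 then (1:ℝ) else 0)) : ℂ)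
    + (↑(-(Real.log (‖(y:ℂ)‖) / (2*Real.pi))) : ℂ) * I

lemma alphaOf_re (y : ℂˣ) :
    (alphaOf y).re = (y:ℂ).arg / (2*Real.pi) + (if (y:ℂ).arg < 0 then (1:ℝ) else 0) := by
  simp only [alphaOf, Complex.add_re, Complex.ofReal_re, Complex.mul_re, Complex.ofReal_im,
    Complex.I_re, Complex.I_im]
  ring

lemma alphaOf_re_nonneg (y : ℂˣ) : 0 ≤ (alphaOf y).re := by
  rw [alphaOf_re]
  have hπ := Real.pi_pos
  rcases lt_or_ge (y:ℂ).arg 0 with h | h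
  · rw [if_pos h]
    have := Complex.neg_pi_lt_arg (y:ℂ)
    have : -(2*Real.pi) < (y:ℂ).arg := by linarith
    have : -1 < (y:ℂ).arg / (2*Real.pi) := by
      rw [lt_div_iff₀ (by linarith)]; linarith
    linarith
  · rw [if_neg (not_lt.mpr h)]
    positivity

lemma alphaOf_re_lt_one (y : ℂˣ) : (alphaOf y).re < 1 := by
  rw [alphaOf_re]
  have hπ := Real.pi_pos
  rcases lt_or_ge (y:ℂ).arg 0 with h | h
  · rw [if_pos h]
    have : (y:ℂ).arg / (2*Real.pi) < 0 := div_neg_of_neg_of_pos h (by linarith)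
    linarith
  · rw [if_neg (not_lt.mpr h)]
    have := Complex.arg_le_pi (y:ℂ)
    have : (y:ℂ).arg / (2*Real.pi) < 1 := by
      rw [div_lt_iff₀ (by linarith)]; linarith
    linarith

lemma exp_alphaOf (y : ℂˣ) : Complex.exp (2 * (Real.pi:ℂ) * I * alphaOf y) = y := by
  have habs : (0:ℝ) < ‖(y:ℂ)‖ := by
    simpa using norm_pos_iff.mpr (Units.ne_zero y)
  have hπ : (Real.pi:ℝ) ≠ 0 := Real.pi_ne_zero
  set c : ℝ := if (y:ℂ).arg < 0 then (1:ℝ) else 0 with hc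
  have hsplit : 2 * (Real.pi:ℂ) * I * alphaOf y
      = (↑(Real.log (‖(y:ℂ)‖)) : ℂ) + (↑((y:ℂ).arg) * I + (2 * (Real.pi:ℂ) * c) * I) := by
    rw [alphaOf, ← hc]
    push_cast
    have h1 : (2:ℂ) * Real.pi * I * (((y:ℂ).arg / (2*Real.pi) + c) + (-(Real.log (‖(y:ℂ)‖) / (2*Real.pi))) * I)
        = (2 * (Real.pi:ℂ)) * ((y:ℂ).arg / (2*Real.pi)) * I + 2 * (Real.pi:ℂ) * c * I
          - (2 * (Real.pi:ℂ)) * (Real.log (‖(y:ℂ)‖) / (2*Real.pi)) * (I*I) := by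
      ring
    rw [h1, Complex.I_mul_I]
    have hne : (2*(Real.pi:ℂ)) ≠ 0 := by
      simp [Real.pi_ne_zero]
    have h2 : (2 * (Real.pi:ℂ)) * (((y:ℂ).arg : ℂ) / (2*Real.pi)) = ((y:ℂ).arg : ℂ) := by
      rw [mul_comm]; exact div_mul_cancel₀ _ hne
    have h3 : (2 * (Real.pi:ℂ)) * ((Real.log (‖(y:ℂ)‖) : ℂ) / (2*Real.pi))
        = (Real.log (‖(y:ℂ)‖) : ℂ) := by
      rw [mul_comm]; exact div_mul_cancel₀ _ hne
    rw [h2, h3]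
    ring
  rw [hsplit, Complex.exp_add, Complex.exp_add]
  have e1 : Complex.exp (↑(Real.log (‖(y:ℂ)‖)) : ℂ) = (‖(y:ℂ)‖ : ℂ) := by
    rw [← Complex.ofReal_exp, Real.exp_log habs]
  have e2 : Complex.exp ((2 * (Real.pi:ℂ) * c) * I) = 1 := by
    rcases eq_or_ne c 0 with h | h
    · rw [h]; simp
    · have : c = 1 := by rw [hc] at h ⊢; split <;> simp_all
      rw [this]
      simpa using Complex.exp_two_pi_mul_I
  rw [e1, e2, mul_one]
  exact Complex.norm_mul_exp_arg_mul_I (y:ℂ)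

lemma alphaOf_one : alphaOf (1 : ℂˣ) = 0 := by
  have : ((1:ℂˣ):ℂ) = 1 := rfl
  simp [alphaOf, this]

lemma ypoint_val (α : Fin k → ℂ) (i : Fin k) :
    ((ypoint α i : ℂˣ) : ℂ) = Complex.exp (2 * (Real.pi:ℂ) * I * α i) := rfl

lemma ypoint_alphaOf (y : Fin k → ℂˣ) (α : Fin k → ℂ) (h : ∀ i, α i = alphaOf (y i)) :
    ypoint α = y := by
  funext i
  ext
  rw [ypoint_val, h i, exp_alphaOf]

end AlphaY
section Vanishing
open Complex
variable {d k : ℕ}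

lemma pi_single_eq (i : Fin d) : (Pi.single i 1 : Fin d → ℤ) = fun j => if i = j then 1 else 0 := by
  funext j
  simp [Pi.single_apply, eq_comm]

lemma f_apply_sum (f : (Fin d → ℤ) →ₗ[ℤ] ℤ) (w : Fin d → ℤ) :
    f w = ∑ j, w j * f (Pi.single j 1) := by
  rw [LinearMap.pi_apply_eq_sum_univ f w]
  exact Finset.sum_congr rfl fun j _ => by rw [pi_single_eq, smul_eq_mul]

lemma sum_alpha_f {F : StackyFan d k} {β : Fin d → ℂ} {α : Fin k → ℂ} {n : Fin d → ℤ}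
    (hn : ∀ j, ∑ i, α i * (F.v i j : ℂ) = (n j : ℂ) + β j) (f : (Fin d → ℤ) →ₗ[ℤ] ℤ) :
    ∑ i, α i * (f (F.v i) : ℂ) = ((∑ j, n j * f (Pi.single j 1) : ℤ) : ℂ) + fval f β := by
  have step1 : ∀ i, α i * (f (F.v i) : ℂ) = ∑ j, (α i * (F.v i j : ℂ)) * (f (Pi.single j 1) : ℂ) := by
    intro i
    rw [f_apply_sum f (F.v i)]
    push_cast
    rw [Finset.mul_sum]
    exact Finset.sum_congr rfl fun j _ => by ring
  calc ∑ i, α i * (f (F.v i) : ℂ)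
      = ∑ i, ∑ j, (α i * (F.v i j : ℂ)) * (f (Pi.single j 1) : ℂ) :=
        Finset.sum_congr rfl fun i _ => step1 i
    _ = ∑ j, (∑ i, α i * (F.v i j : ℂ)) * (f (Pi.single j 1) : ℂ) := by
        rw [Finset.sum_comm]
        exact Finset.sum_congr rfl fun j _ => by rw [Finset.sum_mul]
    _ = ∑ j, ((n j : ℂ) + β j) * (f (Pi.single j 1) : ℂ) :=
        Finset.sum_congr rfl fun j _ => by rw [hn j]
    _ = ((∑ j, n j * f (Pi.single j 1) : ℤ) : ℂ) + fval f β := by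
        push_cast [fval]
        rw [← Finset.sum_add_distrib]
        exact Finset.sum_congr rfl fun j _ => by ring

lemma evalAt_ypoint_V {F : StackyFan d k} {β : Fin d → ℂ} {α : Fin k → ℂ} {n : Fin d → ℤ}
    (hn : ∀ j, ∑ i, α i * (F.v i j : ℂ) = (n j : ℂ) + β j) (f : (Fin d → ℤ) →ₗ[ℤ] ℤ) :
    evalAt (ypoint α) (Rmon (Finsupp.equivFunOnFinite.symm fun i => f (F.v i))
      - algebraMap ℂ (Laur k) (Complex.exp (2 * Real.pi * Complex.I * fval f β))) = 0 := by
  rw [map_sub, AlgHom.commutes, evalAt_Rmon, sub_eq_zero]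
  have h1 : ∀ i, ((ypoint α i : ℂˣ) : ℂ) ^ ((Finsupp.equivFunOnFinite.symm fun i => f (F.v i)) i)
      = Complex.exp (2 * (Real.pi:ℂ) * I * (α i * (f (F.v i) : ℂ))) := by
    intro i
    have : ((Finsupp.equivFunOnFinite.symm fun i => f (F.v i)) i) = f (F.v i) := rfl
    rw [this, ypoint_val]
    rw [← Complex.exp_int_mul]
    congr 1
    ring
  rw [Finset.prod_congr rfl fun i _ => h1 i, ← Complex.exp_sum]
  rw [show ∑ i, 2 * (Real.pi:ℂ) * I * (α i * (f (F.v i) : ℂ))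
      = 2 * (Real.pi:ℂ) * I * ∑ i, α i * (f (F.v i) : ℂ) by rw [Finset.mul_sum]]
  rw [sum_alpha_f hn f, mul_add, Complex.exp_add, exp_two_pi_int, one_mul]
  exact (Algebra.algebraMap_self_apply _).symm

lemma evalAt_one_sub_Rvar (y : Fin k → ℂˣ) (i : Fin k) :
    evalAt y (1 - Rvar i) = 1 - (y i : ℂ) := by
  rw [map_sub, map_one, evalAt_Rvar]

lemma evalAt_ypoint_U {α : Fin k → ℂ} {I : Finset (Fin k)} {i₀ : Fin k} (hi₀ : i₀ ∈ I)
    (hz : α i₀ = 0) : evalAt (ypoint α) (∏ i ∈ I, (1 - Rvar i)) = 0 := by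
  rw [map_prod]
  refine Finset.prod_eq_zero hi₀ ?_
  rw [evalAt_one_sub_Rvar, ypoint_val, hz, mul_zero, Complex.exp_zero, sub_self]

/-- For `α ∈ Bx`, the ideal `U + V` is contained in the kernel of evaluation at `ypoint α`. -/
lemma ideal_le_ker_of_mem_Bx (F : StackyFan d k) (β : Fin d → ℂ) {α : Fin k → ℂ}
    (hα : α ∈ Bx F β) :
    Uideal F.cones ⊔ Videal F.v β ≤ RingHom.ker (evalAt (ypoint α)).toRingHom := by
  obtain ⟨Imax, hmax, hre, hsupp, n, hn⟩ := hα
  refine sup_le ?_ ?_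
  · rw [Uideal, Ideal.span_le]
    rintro p ⟨I, hI, rfl⟩
    have : ∃ i₀ ∈ I, α i₀ = 0 := by
      by_contra h
      push_neg at h
      refine hI (F.downClosed Imax hmax.1 I fun i hi => ?_)
      by_contra hins
      exact h i hi (hsupp i hins)
    obtain ⟨i₀, hi₀, hz⟩ := this
    exact evalAt_ypoint_U hi₀ hz
  · rw [Videal, Ideal.span_le]
    rintro p ⟨f, rfl⟩
    exact evalAt_ypoint_V hn f

/-- Every cone extends to a maximal cone. -/
lemma exists_isMaxCone (F : StackyFan d k) {I : Finset (Fin k)} (hI : I ∈ F.cones) :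
    ∃ J, IsMaxCone F J ∧ I ⊆ J := by
  have hne : (F.cones.filter (fun J => I ⊆ J)).Nonempty :=
    ⟨I, Finset.mem_filter.mpr ⟨hI, Finset.Subset.refl I⟩⟩
  obtain ⟨J, hJ, hmax'⟩ := Finset.exists_maximal hne
  have hmax : ∀ x ∈ F.cones.filter (fun J => I ⊆ J), ¬ J < x :=
    fun x hx hlt => hlt.not_ge (hmax' hx hlt.le)
  rw [Finset.mem_filter] at hJ
  refine ⟨J, ⟨hJ.1, fun K hK hJK => ?_⟩, hJ.2⟩
  by_contra hne'
  exact hmax K (Finset.mem_filter.mpr ⟨hK, hJ.2.trans hJK⟩)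
    (lt_of_le_of_ne hJK (Ne.symm hne'))

/-- Conversely, a point killing `U + V` comes from an element of `Bx`. -/
lemma exists_mem_Bx_of_ker (F : StackyFan d k) (β : Fin d → ℂ) (y : Fin k → ℂˣ)
    (hker : Uideal F.cones ⊔ Videal F.v β ≤ RingHom.ker (evalAt y).toRingHom) :
    ∃ α ∈ Bx F β, ypoint α = y := by
  classical
  set α : Fin k → ℂ := fun i => alphaOf (y i) with hα
  have hy : ypoint α = y := ypoint_alphaOf y α fun i => rfl
  refine ⟨α, ?_, hy⟩
  -- the support of y is a cone
  set I' : Finset (Fin k) := Finset.univ.filter (fun i => y i ≠ 1) with hI'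
  have hI'cone : I' ∈ F.cones := by
    by_contra hI'c
    have hgen : (∏ i ∈ I', (1 - Rvar i)) ∈ Uideal F.cones :=
      Ideal.subset_span ⟨I', hI'c, rfl⟩
    have := hker (le_sup_left (a := Uideal F.cones) (b := Videal F.v β) hgen)
    rw [RingHom.mem_ker] at this
    have hprod : ∀ i ∈ I', (evalAt y) (1 - Rvar i) ≠ 0 := by
      intro i hi
      rw [evalAt_one_sub_Rvar, sub_ne_zero]
      intro h1
      have : y i = 1 := by ext; rw [← h1]; rfl
      exact (Finset.mem_filter.mp hi).2 this
    rw [show ((evalAt y).toRingHom : Laur k →+* ℂ) (∏ i ∈ I', (1 - Rvar i))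
        = evalAt y (∏ i ∈ I', (1 - Rvar i)) from rfl, map_prod] at this
    exact Finset.prod_ne_zero_iff.mpr hprod this
  obtain ⟨Imax, hmax, hsub⟩ := exists_isMaxCone F hI'cone
  have hzero : ∀ i, i ∉ Imax → α i = 0 := by
    intro i hi
    have : y i = 1 := by
      by_contra h
      exact hi (hsub (Finset.mem_filter.mpr ⟨Finset.mem_univ i, h⟩))
    rw [hα]
    simp only [this]
    exact alphaOf_one
  -- the lattice membership from the V relations at coordinate functionals
  have hVn : ∀ j : Fin d, ∃ m : ℤ, ∑ i, α i * (F.v i j : ℂ) = (m : ℂ) + β j := by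
    intro j
    set f : (Fin d → ℤ) →ₗ[ℤ] ℤ := LinearMap.proj j with hf
    have hfv : ∀ w : Fin d → ℤ, f w = w j := fun w => rfl
    have hfval : fval f β = β j := by
      rw [fval]
      rw [Fintype.sum_eq_single j (fun j' hj' => ?_)]
      · rw [hfv, Pi.single_eq_same]
        push_cast
        ring
      · rw [hfv, Pi.single_eq_of_ne ?_]
        · push_cast; ring
        · exact Ne.symm hj'
    have hgen : (Rmon (Finsupp.equivFunOnFinite.symm fun i => f (F.v i))
        - algebraMap ℂ (Laur k) (Complex.exp (2 * Real.pi * Complex.I * fval f β)))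
          ∈ Videal F.v β := Ideal.subset_span ⟨f, rfl⟩
    have h0 := hker (le_sup_right (a := Uideal F.cones) (b := Videal F.v β) hgen)
    rw [RingHom.mem_ker] at h0
    rw [show ((evalAt y).toRingHom : Laur k →+* ℂ) _ = evalAt y _ from rfl] at h0
    rw [map_sub, AlgHom.commutes, evalAt_Rmon, sub_eq_zero] at h0
    have h1 : ∀ i, ((y i : ℂˣ) : ℂ) ^ ((Finsupp.equivFunOnFinite.symm fun i => f (F.v i)) i)
        = Complex.exp (2 * (Real.pi:ℂ) * I * (α i * (F.v i j : ℂ))) := by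
      intro i
      have he : ((Finsupp.equivFunOnFinite.symm fun i => f (F.v i)) i) = F.v i j := rfl
      have hyi : ((y i : ℂˣ) : ℂ) = Complex.exp (2 * (Real.pi:ℂ) * I * α i) := by
        rw [← hy]; rfl
      rw [he, hyi, ← Complex.exp_int_mul]
      congr 1
      ring
    rw [Finset.prod_congr rfl fun i _ => h1 i, ← Complex.exp_sum] at h0
    rw [show ∑ i, 2 * (Real.pi:ℂ) * I * (α i * (F.v i j : ℂ))
        = 2 * (Real.pi:ℂ) * I * ∑ i, α i * (F.v i j : ℂ) by rw [Finset.mul_sum]] at h0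
    rw [hfval, Algebra.algebraMap_self_apply] at h0
    rw [Complex.exp_eq_exp_iff_exists_int] at h0
    obtain ⟨m, hm⟩ := h0
    refine ⟨m, ?_⟩
    have : 2 * (Real.pi:ℂ) * I * (∑ i, α i * (F.v i j : ℂ))
        = 2 * (Real.pi:ℂ) * I * ((m : ℂ) + β j) := by
      rw [hm]; ring
    exact mul_left_cancel₀ twoPiI_ne_zero this
  choose nfun hnfun using hVn
  exact ⟨Imax, hmax, ⟨fun i => ⟨alphaOf_re_nonneg (y i), alphaOf_re_lt_one (y i)⟩,
    hzero, nfun, hnfun⟩⟩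

end Vanishing
section IdealCorr
open Complex
variable {d k : ℕ}

lemma evalAt_surjective (y : Fin k → ℂˣ) : Function.Surjective (evalAt y) :=
  fun c => ⟨algebraMap ℂ (Laur k) c, (evalAt y).commutes c⟩

/-- When the ideal is contained in the kernel, its image is the kernel of the lifted map. -/
lemma map_ker_eq {W : Ideal (Laur k)} {y : Fin k → ℂˣ}
    (hker : W ≤ RingHom.ker (evalAt y).toRingHom) :
    Ideal.map (Ideal.Quotient.mk W) (RingHom.ker (evalAt y).toRingHom)
      = RingHom.ker (Ideal.Quotient.lift W (evalAt y).toRingHom (fun a ha => hker ha)) := by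
  apply le_antisymm
  · rw [Ideal.map_le_iff_le_comap]
    intro x hx
    rw [Ideal.mem_comap, RingHom.mem_ker]
    exact hx
  · intro ξ hξ
    obtain ⟨x, rfl⟩ := Ideal.Quotient.mk_surjective ξ
    rw [RingHom.mem_ker] at hξ
    exact Ideal.mem_map_of_mem _ hξ

lemma lift_surjective {W : Ideal (Laur k)} {y : Fin k → ℂˣ}
    (hker : W ≤ RingHom.ker (evalAt y).toRingHom) :
    Function.Surjective (Ideal.Quotient.lift W (evalAt y).toRingHom (fun a ha => hker ha)) := by
  intro c
  obtain ⟨x, hx⟩ := evalAt_surjective y c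
  exact ⟨Ideal.Quotient.mk W x, by exact hx⟩

lemma map_ker_isMaximal {W : Ideal (Laur k)} {y : Fin k → ℂˣ}
    (hker : W ≤ RingHom.ker (evalAt y).toRingHom) :
    (Ideal.map (Ideal.Quotient.mk W) (RingHom.ker (evalAt y).toRingHom)).IsMaximal := by
  rw [map_ker_eq hker]
  exact RingHom.ker_isMaximal_of_surjective _ (lift_surjective hker)

lemma comap_map_ker {W : Ideal (Laur k)} {y : Fin k → ℂˣ}
    (hker : W ≤ RingHom.ker (evalAt y).toRingHom) :
    Ideal.comap (Ideal.Quotient.mk W)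
      (Ideal.map (Ideal.Quotient.mk W) (RingHom.ker (evalAt y).toRingHom))
      = RingHom.ker (evalAt y).toRingHom := by
  rw [Ideal.comap_map_of_surjective _ Ideal.Quotient.mk_surjective]
  rw [← RingHom.ker_eq_comap_bot, Ideal.mk_ker]
  exact sup_eq_left.mpr hker

lemma ker_evalAt_inj {y y' : Fin k → ℂˣ}
    (h : RingHom.ker (evalAt y).toRingHom = RingHom.ker (evalAt y').toRingHom) : y = y' := by
  funext i
  have hmem : Rvar i - algebraMap ℂ (Laur k) ((y i : ℂ)) ∈ RingHom.ker (evalAt y).toRingHom := by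
    rw [RingHom.mem_ker]
    show evalAt y _ = 0
    rw [map_sub, evalAt_Rvar, AlgHom.commutes, Algebra.algebraMap_self_apply, sub_self]
  rw [h, RingHom.mem_ker] at hmem
  have : evalAt y' (Rvar i - algebraMap ℂ (Laur k) ((y i : ℂ))) = 0 := hmem
  rw [map_sub, evalAt_Rvar, AlgHom.commutes, Algebra.algebraMap_self_apply, sub_eq_zero] at this
  exact Units.ext this.symm

instance laurFG : AddMonoid.FG (Fin k →₀ ℤ) := by
  rw [← AddGroup.fg_iff_addMonoid_fg, ← Module.Finite.iff_addGroup_fg]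
  infer_instance

instance laurFiniteType : Algebra.FiniteType ℂ (Laur k) :=
  AddMonoidAlgebra.finiteType_of_fg ℂ (Fin k →₀ ℤ)

instance laurNoetherian : IsNoetherianRing (Laur k) :=
  Algebra.FiniteType.isNoetherianRing ℂ (Laur k)

/-- Every maximal ideal of the Laurent polynomial ring is the kernel of an evaluation. -/
lemma maximal_eq_ker (M : Ideal (Laur k)) (hM : M.IsMaximal) :
    ∃ y : Fin k → ℂˣ, M = RingHom.ker (evalAt y).toRingHom := by
  letI : Field (Laur k ⧸ M) := Ideal.Quotient.field M
  haveI : Algebra.FiniteType ℂ (Laur k ⧸ M) :=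
    Algebra.FiniteType.of_surjective (Ideal.Quotient.mkₐ ℂ M)
      (Ideal.Quotient.mkₐ_surjective ℂ M)
  haveI : Module.Finite ℂ (Laur k ⧸ M) := finite_of_finite_type_of_isJacobsonRing ℂ _
  haveI : Algebra.IsIntegral ℂ (Laur k ⧸ M) := Algebra.IsIntegral.of_finite ℂ _
  have hsurj : Function.Surjective (algebraMap ℂ (Laur k ⧸ M)) :=
    (IsAlgClosed.algebraMap_bijective_of_isIntegral (k := ℂ)).2
  have hinj : Function.Injective (algebraMap ℂ (Laur k ⧸ M)) :=
    (algebraMap ℂ (Laur k ⧸ M)).injective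
  let e : ℂ ≃+* (Laur k ⧸ M) := RingEquiv.ofBijective (algebraMap ℂ (Laur k ⧸ M)) ⟨hinj, hsurj⟩
  let φ : Laur k →ₐ[ℂ] ℂ :=
    { toRingHom := (e.symm : (Laur k ⧸ M) →+* ℂ).comp (Ideal.Quotient.mk M)
      commutes' := fun c => by
        show e.symm (Ideal.Quotient.mk M (algebraMap ℂ (Laur k) c)) = c
        have : (Ideal.Quotient.mk M) (algebraMap ℂ (Laur k) c) = e c := rfl
        rw [this, RingEquiv.symm_apply_apply] }
  obtain ⟨y, hy⟩ := exists_evalAt φ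
  refine ⟨y, ?_⟩
  rw [← hy]
  ext x
  rw [RingHom.mem_ker]
  show x ∈ M ↔ e.symm (Ideal.Quotient.mk M x) = 0
  rw [← Ideal.Quotient.eq_zero_iff_mem]
  constructor
  · intro h; rw [h, map_zero]
  · intro h
    have := congrArg e h
    rw [RingEquiv.apply_symm_apply, map_zero] at this
    exact this

end IdealCorr
section Finiteness
open Complex
variable {d k : ℕ}

lemma linIndep_complex (F : StackyFan d k) {I : Finset (Fin k)} (hI : I ∈ F.cones)
    {c : Fin k → ℂ} (hsupp : ∀ i, i ∉ I → c i = 0)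
    (hsum : ∀ j, ∑ i, c i * (F.v i j : ℂ) = 0) : ∀ i, c i = 0 := by
  have hre : ∀ j, ∑ i, (c i).re * (F.v i j : ℝ) = 0 := by
    intro j
    have := congrArg Complex.re (hsum j)
    rw [Complex.re_sum, Complex.zero_re] at this
    rw [← this]
    exact Finset.sum_congr rfl fun i _ => by simp [Complex.mul_re]
  have him : ∀ j, ∑ i, (c i).im * (F.v i j : ℝ) = 0 := by
    intro j
    have := congrArg Complex.im (hsum j)
    rw [Complex.im_sum, Complex.zero_im] at this
    rw [← this]
    exact Finset.sum_congr rfl fun i _ => by simp [Complex.mul_im]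
  have key : ∀ g : Fin k → ℝ, (∀ i, i ∉ I → g i = 0) →
      (∀ j, ∑ i, g i * (F.v i j : ℝ) = 0) → ∀ i, g i = 0 := by
    intro g hg hs i
    by_cases hi : i ∈ I
    · have hLI := (Fintype.linearIndependent_iff).mp (F.simplicial I hI)
      have h0 : ∑ x : I, g x • (fun j => (F.v x j : ℝ)) = 0 := by
        funext j
        rw [Finset.sum_apply]
        simp only [Pi.smul_apply, smul_eq_mul, Pi.zero_apply]
        rw [Finset.sum_coe_sort I (fun x => g x * ((F.v x j : ℤ) : ℝ))]
        rw [Finset.sum_subset (Finset.subset_univ I)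
          (fun x _ hx => by rw [hg x hx, zero_mul])]
        exact hs j
      exact hLI (fun x : I => g x) h0 ⟨i, hi⟩
    · exact hg i hi
  intro i
  have h1 := key (fun i => (c i).re) (fun i hi => by show (c i).re = 0; rw [hsupp i hi]; simp) hre i
  have h2 := key (fun i => (c i).im) (fun i hi => by show (c i).im = 0; rw [hsupp i hi]; simp) him i
  exact Complex.ext h1 h2

lemma bxCone_finite (F : StackyFan d k) (β : Fin d → ℂ) {I : Finset (Fin k)}
    (hI : I ∈ F.cones) : (BxCone F β I).Finite := by
  classical
  set G : (Fin k → ℂ) → (Fin d → ℝ) :=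
    fun α => fun j => (∑ i, (α i).re * (F.v i j : ℝ)) - (β j).re with hG
  set B : Fin d → ℤ := fun j => ⌈(∑ i, |(F.v i j : ℝ)|) + |(β j).re|⌉ with hB
  -- value of G on BxCone
  have hval : ∀ α ∈ BxCone F β I, ∀ (n : Fin d → ℤ),
      (∀ j, ∑ i, α i * (F.v i j : ℂ) = (n j : ℂ) + β j) → ∀ j, G α j = (n j : ℝ) := by
    intro α _ n hn j
    have := congrArg Complex.re (hn j)
    rw [Complex.re_sum] at this
    have h1 : ∑ i, ((α i) * ((F.v i j : ℤ) : ℂ)).re = ∑ i, (α i).re * (F.v i j : ℝ) :=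
      Finset.sum_congr rfl fun i _ => by simp [Complex.mul_re]
    rw [h1] at this
    have h2 : (((n j : ℤ) : ℂ) + β j).re = (n j : ℝ) + (β j).re := by simp
    rw [h2] at this
    rw [hG]
    simp only
    rw [this]
    ring
  -- G is injective on BxCone
  have hinj : Set.InjOn G (BxCone F β I) := by
    intro α hα α' hα' hGe
    obtain ⟨hre, hsupp, n, hn⟩ := hα
    obtain ⟨hre', hsupp', n', hn'⟩ := hα'
    have hnn : ∀ j, (n j : ℝ) = (n' j : ℝ) := by
      intro j
      rw [← hval α ⟨hre, hsupp, n, hn⟩ n hn j, ← hval α' ⟨hre', hsupp', n', hn'⟩ n' hn' j, hGe]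
    have hsame : ∀ j, ∑ i, (α i - α' i) * (F.v i j : ℂ) = 0 := by
      intro j
      have : ((n j : ℤ) : ℂ) = ((n' j : ℤ) : ℂ) := by
        exact_mod_cast congrArg (fun r : ℝ => (r : ℂ)) (hnn j)
      calc ∑ i, (α i - α' i) * (F.v i j : ℂ)
          = (∑ i, α i * (F.v i j : ℂ)) - ∑ i, α' i * (F.v i j : ℂ) := by
            rw [← Finset.sum_sub_distrib]
            exact Finset.sum_congr rfl fun i _ => by ring
        _ = 0 := by rw [hn j, hn' j, this]; ring
    have hz := linIndep_complex F hI
      (c := fun i => α i - α' i)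
      (fun i hi => by show α i - α' i = 0; rw [hsupp i hi, hsupp' i hi, sub_self]) hsame
    funext i
    exact sub_eq_zero.mp (hz i)
  -- the image is contained in a finite set
  have himage : G '' (BxCone F β I) ⊆
      Set.pi Set.univ (fun j => (fun m : ℤ => (m : ℝ)) '' (Set.Icc (-(B j)) (B j))) := by
    rintro x ⟨α, hα, rfl⟩
    obtain ⟨hre, hsupp, n, hn⟩ := hα
    intro j _
    refine ⟨n j, ?_, (hval α ⟨hre, hsupp, n, hn⟩ n hn j).symm⟩
    have hbound : |(n j : ℝ)| ≤ (∑ i, |(F.v i j : ℝ)|) + |(β j).re| := by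
      rw [← hval α ⟨hre, hsupp, n, hn⟩ n hn j, hG]
      simp only
      have h1 : |(∑ i, (α i).re * (F.v i j : ℝ)) - (β j).re|
          ≤ |∑ i, (α i).re * (F.v i j : ℝ)| + |(β j).re| := abs_sub _ _
      have h2 : |∑ i, (α i).re * (F.v i j : ℝ)| ≤ ∑ i, |(F.v i j : ℝ)| := by
        refine (Finset.abs_sum_le_sum_abs _ _).trans ?_
        refine Finset.sum_le_sum fun i _ => ?_
        rw [abs_mul]
        have h3 : |(α i).re| ≤ 1 := by
          rw [abs_le]
          constructor
          · linarith [(hre i).1]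
          · linarith [(hre i).2]
        nlinarith [abs_nonneg ((F.v i j : ℝ))]
      linarith
    have hceil : (∑ i, |(F.v i j : ℝ)|) + |(β j).re| ≤ (B j : ℝ) := Int.le_ceil _
    rw [abs_le] at hbound
    constructor
    · have : -(B j : ℝ) ≤ (n j : ℝ) := by linarith
      exact_mod_cast this
    · have : (n j : ℝ) ≤ (B j : ℝ) := by linarith
      exact_mod_cast this
  have hTfin : (Set.pi Set.univ
      (fun j => (fun m : ℤ => (m : ℝ)) '' (Set.Icc (-(B j)) (B j)))).Finite :=
    Set.Finite.pi fun j => (Set.finite_Icc _ _).image _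
  exact Set.Finite.of_finite_image (hTfin.subset himage) hinj

lemma bx_finite (F : StackyFan d k) (β : Fin d → ℂ) : (Bx F β).Finite := by
  have hsub : Bx F β ⊆ ⋃ I ∈ F.cones, BxCone F β I := by
    rintro α ⟨I, hmax, hα⟩
    exact Set.mem_biUnion hmax.1 hα
  exact (Set.Finite.biUnion F.cones.finite_toSet fun I hI => bxCone_finite F β hI).subset hsub

end Finiteness
section Classify
open Complex
variable {d k : ℕ}

lemma kring_maximal_classify (F : StackyFan d k) (β : Fin d → ℂ)
    (M : Ideal (Laur k ⧸ (Uideal F.cones ⊔ Videal F.v β))) (hM : M.IsMaximal) :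
    ∃ α ∈ Bx F β, M = Ideal.map (Ideal.Quotient.mk (Uideal F.cones ⊔ Videal F.v β))
      (RingHom.ker (evalAt (ypoint α)).toRingHom) := by
  haveI := hM
  have hM' : (Ideal.comap (Ideal.Quotient.mk (Uideal F.cones ⊔ Videal F.v β)) M).IsMaximal :=
    Ideal.comap_isMaximal_of_surjective _ Ideal.Quotient.mk_surjective
  obtain ⟨y, hy⟩ := maximal_eq_ker _ hM'
  have hWle : (Uideal F.cones ⊔ Videal F.v β)
      ≤ Ideal.comap (Ideal.Quotient.mk (Uideal F.cones ⊔ Videal F.v β)) M := by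
    intro x hx
    rw [Ideal.mem_comap, Ideal.Quotient.eq_zero_iff_mem.mpr hx]
    exact M.zero_mem
  have hker : (Uideal F.cones ⊔ Videal F.v β) ≤ RingHom.ker (evalAt y).toRingHom := hy ▸ hWle
  obtain ⟨α, hαBx, hαy⟩ := exists_mem_Bx_of_ker F β y hker
  refine ⟨α, hαBx, ?_⟩
  rw [hαy, ← hy, Ideal.map_comap_of_surjective _ Ideal.Quotient.mk_surjective]

lemma bx_re_bounds {F : StackyFan d k} {β : Fin d → ℂ} {α : Fin k → ℂ} (hα : α ∈ Bx F β) :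
    ∀ i, 0 ≤ (α i).re ∧ (α i).re < 1 := by
  obtain ⟨I, _, hre, _⟩ := hα
  exact hre

lemma maxIdl_injOn (F : StackyFan d k) (β : Fin d → ℂ) {α α' : Fin k → ℂ}
    (hα : α ∈ Bx F β) (hα' : α' ∈ Bx F β)
    (h : Ideal.map (Ideal.Quotient.mk (Uideal F.cones ⊔ Videal F.v β))
        (RingHom.ker (evalAt (ypoint α)).toRingHom)
      = Ideal.map (Ideal.Quotient.mk (Uideal F.cones ⊔ Videal F.v β))
        (RingHom.ker (evalAt (ypoint α')).toRingHom)) : α = α' := by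
  have hker := ideal_le_ker_of_mem_Bx F β hα
  have hker' := ideal_le_ker_of_mem_Bx F β hα'
  have hcomap := congrArg (Ideal.comap (Ideal.Quotient.mk (Uideal F.cones ⊔ Videal F.v β))) h
  rw [comap_map_ker hker, comap_map_ker hker'] at hcomap
  have hy : ypoint α = ypoint α' := ker_evalAt_inj hcomap
  funext i
  have hexp : Complex.exp (2 * (Real.pi:ℂ) * I * α i)
      = Complex.exp (2 * (Real.pi:ℂ) * I * α' i) := by
    rw [← ypoint_val, ← ypoint_val, hy]
  exact alpha_unique (bx_re_bounds hα i).1 (bx_re_bounds hα i).2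
    (bx_re_bounds hα' i).1 (bx_re_bounds hα' i).2 hexp

lemma maximal_setOf_finite (F : StackyFan d k) (β : Fin d → ℂ) :
    {M : Ideal (Laur k ⧸ (Uideal F.cones ⊔ Videal F.v β)) | M.IsMaximal}.Finite := by
  have hsub : {M : Ideal (Laur k ⧸ (Uideal F.cones ⊔ Videal F.v β)) | M.IsMaximal}
      ⊆ (fun α : Fin k → ℂ => Ideal.map (Ideal.Quotient.mk (Uideal F.cones ⊔ Videal F.v β))
          (RingHom.ker (evalAt (ypoint α)).toRingHom)) '' (Bx F β) := by
    intro M hM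
    obtain ⟨α, hαBx, hα⟩ := kring_maximal_classify F β M hM
    exact ⟨α, hαBx, hα.symm⟩
  exact ((bx_finite F β).image _).subset hsub

end Classify
section Artinian
open Complex

/-- A Noetherian Jacobson finite-type `ℂ`-algebra with finitely many maximal ideals
is Artinian. -/
lemma artinian_of_finite_maximals (R : Type) [CommRing R] [Algebra ℂ R]
    [IsNoetherianRing R] [IsJacobsonRing R] [Algebra.FiniteType ℂ R]
    (hfin : {M : Ideal R | M.IsMaximal}.Finite) : IsArtinianRing R := by
  classical
  obtain ⟨m, hm⟩ := IsNoetherianRing.isNilpotent_nilradical R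
  -- the nilradical is the intersection of the (finitely many) maximal ideals
  have hNinf : nilradical R = ⨅ M : hfin.toFinset, (M : Ideal R) := by
    have h1 : nilradical R = Ideal.jacobson ⊥ := by
      rw [show nilradical R = Ideal.radical ⊥ from rfl, Ideal.radical_eq_jacobson]
    rw [h1, Ideal.jacobson]
    apply le_antisymm
    · exact le_iInf fun M => sInf_le ⟨bot_le, hfin.mem_toFinset.mp M.2⟩
    · exact le_sInf fun J hJ => iInf_le_of_le ⟨J, hfin.mem_toFinset.mpr hJ.2⟩ le_rfl
  -- each quotient by a maximal ideal is a finite ℂ-module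
  haveI hquotfin : ∀ M : hfin.toFinset, Module.Finite ℂ (R ⧸ (M : Ideal R)) := by
    intro M
    haveI : (M : Ideal R).IsMaximal := hfin.mem_toFinset.mp M.2
    letI : Field (R ⧸ (M : Ideal R)) := Ideal.Quotient.field _
    haveI : Algebra.FiniteType ℂ (R ⧸ (M : Ideal R)) :=
      Algebra.FiniteType.of_surjective (Ideal.Quotient.mkₐ ℂ _)
        (Ideal.Quotient.mkₐ_surjective ℂ _)
    exact finite_of_finite_type_of_isJacobsonRing ℂ _
  -- the quotient by the nilradical is a finite ℂ-module
  have FD0 : Module.Finite ℂ (R ⧸ (Submodule.restrictScalars ℂ (nilradical R))) := by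
    let Φ : R →ₐ[ℂ] ((M : hfin.toFinset) → R ⧸ (M : Ideal R)) :=
      Pi.algHom ℂ _ (fun M => Ideal.Quotient.mkₐ ℂ (M : Ideal R))
    have hkerΦ : LinearMap.ker Φ.toLinearMap = Submodule.restrictScalars ℂ (nilradical R) := by
      ext x
      rw [LinearMap.mem_ker, Submodule.restrictScalars_mem, hNinf, Submodule.mem_iInf]
      constructor
      · intro h M
        have h' : Φ x = 0 := h
        have : Φ x M = 0 := by rw [h']; rfl
        exact Ideal.Quotient.eq_zero_iff_mem.mp this
      · intro h
        show Φ x = 0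
        funext M
        exact Ideal.Quotient.eq_zero_iff_mem.mpr (h M)
    haveI : Module.Finite ℂ ((M : hfin.toFinset) → R ⧸ (M : Ideal R)) := Module.Finite.pi
    haveI : Module.Finite ℂ (LinearMap.range Φ.toLinearMap) := inferInstance
    have e := (LinearMap.quotKerEquivRange Φ.toLinearMap)
    rw [hkerΦ] at e
    exact Module.Finite.equiv e.symm.symm.symm
  -- lift generators of the quotient mod the nilradical
  obtain ⟨na, g, hg⟩ := Module.Finite.exists_fin (R := ℂ)
    (M := R ⧸ (Submodule.restrictScalars ℂ (nilradical R)))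
  have hlift : ∀ u : Fin na, ∃ a : R, (Submodule.restrictScalars ℂ (nilradical R)).mkQ a = g u :=
    fun u => Submodule.mkQ_surjective _ (g u)
  choose a ha using hlift
  -- main induction
  have main : ∀ i : ℕ, IsArtinian ℂ (R ⧸ (Submodule.restrictScalars ℂ (nilradical R ^ i))) := by
    intro i
    induction i with
    | zero =>
        have htop : Submodule.restrictScalars ℂ ((nilradical R) ^ 0) = (⊤ : Submodule ℂ R) := by
          rw [pow_zero, Ideal.one_eq_top]; rfl
        rw [htop]
        haveI : Subsingleton (R ⧸ (⊤ : Submodule ℂ R)) :=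
          Submodule.Quotient.subsingleton_iff.mpr rfl
        haveI : Finite (R ⧸ (⊤ : Submodule ℂ R)) := Finite.of_subsingleton
        exact isArtinian_of_finite
    | succ i ih =>
        set S1 : Submodule ℂ R := Submodule.restrictScalars ℂ (nilradical R ^ (i+1)) with hS1
        set S0 : Submodule ℂ R := Submodule.restrictScalars ℂ (nilradical R ^ i) with hS0
        have h01 : S1 ≤ S0 := fun x hx => Ideal.pow_le_pow_right (Nat.le_succ i) hx
        rw [isArtinian_iff_submodule_quotient (Submodule.map S1.mkQ S0)]
        constructor
        · -- the middle layer is a finite ℂ-module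
          -- generators of N^i as an ideal
          obtain ⟨sgen, hsgen⟩ := IsNoetherian.noetherian ((nilradical R) ^ i : Ideal R)
          -- generating set of the layer
          have hspan : Submodule.map S1.mkQ S0
              = Submodule.span ℂ (Set.range fun p : Fin na × {x // x ∈ sgen} =>
                  S1.mkQ (a p.1 * (p.2 : R))) := by
            apply le_antisymm
            · rintro ξ hξ
              obtain ⟨z, hz, rfl⟩ := Submodule.mem_map.mp hξ
              have hz0 : z ∈ (nilradical R ^ i : Ideal R) := hz
              have hz' : z ∈ Submodule.span R (↑sgen : Set R) := by
                rw [hsgen]; exact hz0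
              obtain ⟨f, -, hf⟩ := Submodule.mem_span_finset.mp hz'
              have hzsum : S1.mkQ z = ∑ x ∈ sgen, S1.mkQ (f x • x) := by
                rw [← map_sum, hf]
              rw [hzsum]
              refine Submodule.sum_mem _ fun x hx => ?_
              -- decompose f x using the generators of R mod nilradical
              have h1 : (Submodule.restrictScalars ℂ (nilradical R)).mkQ (f x)
                  ∈ Submodule.span ℂ (Set.range g) := by
                rw [hg]; trivial
              rw [Submodule.mem_span_range_iff_exists_fun] at h1
              obtain ⟨c, hc⟩ := h1
              have hwmem : f x - ∑ u, c u • a u ∈ nilradical R := by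
                have h2 : (Submodule.restrictScalars ℂ (nilradical R)).mkQ
                    (f x - ∑ u, c u • a u) = 0 := by
                  rw [map_sub, map_sum]
                  simp only [map_smul, ha]
                  rw [hc, sub_self]
                rw [Submodule.mkQ_apply] at h2
                exact (Submodule.Quotient.mk_eq_zero _).mp h2
              set w : R := f x - ∑ u, c u • a u with hw
              have hfxx : f x • x = (∑ u, c u • (a u * x)) + w * x := by
                have : f x = (∑ u, c u • a u) + w := by rw [hw]; ring
                rw [smul_eq_mul, this, add_mul, Finset.sum_mul]
                congr 1
                exact Finset.sum_congr rfl fun u _ => (smul_mul_assoc _ _ _)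
              have hwx : w * x ∈ (nilradical R ^ (i+1) : Ideal R) := by
                rw [pow_succ]
                have hxNi : x ∈ (nilradical R ^ i : Ideal R) := by
                  rw [← hsgen]
                  exact Submodule.subset_span hx
                rw [mul_comm w x]
                exact Ideal.mul_mem_mul hxNi hwmem
              have hwx0 : S1.mkQ (w * x) = 0 := by
                rw [Submodule.mkQ_apply, Submodule.Quotient.mk_eq_zero]
                exact hwx
              rw [hfxx, map_add, hwx0, add_zero, map_sum]
              refine Submodule.sum_mem _ fun u _ => ?_
              rw [map_smul]
              refine Submodule.smul_mem _ _ (Submodule.subset_span ?_)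
              exact ⟨(u, ⟨x, hx⟩), rfl⟩
            · rintro ξ hξ
              refine Submodule.span_le.mpr ?_ hξ
              rintro _ ⟨p, rfl⟩
              refine Submodule.mem_map_of_mem ?_
              show a p.1 * (p.2 : R) ∈ (nilradical R ^ i : Ideal R)
              refine Ideal.mul_mem_left _ _ ?_
              rw [← hsgen]
              exact Ideal.subset_span p.2.2
          rw [hspan]
          haveI : Module.Finite ℂ
              (Submodule.span ℂ (Set.range fun p : Fin na × {x // x ∈ sgen} =>
                S1.mkQ (a p.1 * (p.2 : R)))) := by
            apply Module.Finite.span_of_finite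
            exact Set.finite_range _
          exact isArtinian_of_fg_of_artinian' (R := ℂ)
        · -- the top quotient is artinian by induction
          have e := Submodule.quotientQuotientEquivQuotient S1 S0 h01
          haveI := ih
          exact isArtinian_of_linearEquiv e.symm
  have hbot : Submodule.restrictScalars ℂ (nilradical R ^ m) = (⊥ : Submodule ℂ R) := by
    rw [hm]; rfl
  have hart : IsArtinian ℂ R := by
    have h := main m
    rw [hbot] at h
    haveI := h
    exact isArtinian_of_linearEquiv (Submodule.quotEquivOfEqBot (⊥ : Submodule ℂ R) rfl)
  exact isArtinian_of_tower ℂ hart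

end Artinian
/-- **Proposition 3.2.** The deformed Grothendieck ring `Kℂ(𝚺;β)` is Artinian, and its
maximal ideals are in one-to-one correspondence with the elements of `Bx(𝚺;β) ⊂ ℂᵏ`:
`α = (αᵢ)` corresponds to the maximal ideal determined by the point `y = (e^{2π√-1 αᵢ})ᵢ`. -/
theorem statement6 {d k : ℕ} (F : StackyFan d k) (hrays : HasAllRays F) (β : Fin d → ℂ) :
    IsArtinianRing (Kring F.v F.cones β) ∧
    ∃ e : ↥(Bx F β) ≃ MaximalSpectrum (Kring F.v F.cones β),
      ∀ α : ↥(Bx F β), (e α).asIdeal = maxIdl F.v F.cones β (α : Fin k → ℂ) := by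
  classical
  haveI hjacLaur : IsJacobsonRing (Laur k) := isJacobsonRing_of_finiteType (A := ℂ)
  haveI hnoeth : IsNoetherianRing (Laur k ⧸ (Uideal F.cones ⊔ Videal F.v β)) :=
    isNoetherianRing_of_surjective (Laur k) _
      (Ideal.Quotient.mk (Uideal F.cones ⊔ Videal F.v β)) Ideal.Quotient.mk_surjective
  haveI hft : Algebra.FiniteType ℂ (Laur k ⧸ (Uideal F.cones ⊔ Videal F.v β)) :=
    Algebra.FiniteType.of_surjective
      (Ideal.Quotient.mkₐ ℂ (Uideal F.cones ⊔ Videal F.v β))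
      (Ideal.Quotient.mkₐ_surjective ℂ _)
  constructor
  · show IsArtinianRing (Laur k ⧸ (Uideal F.cones ⊔ Videal F.v β))
    exact artinian_of_finite_maximals _ (maximal_setOf_finite F β)
  · -- the equivalence
    have hmaxIdl : ∀ α : ↥(Bx F β), (maxIdl F.v F.cones β (α : Fin k → ℂ)).IsMaximal := by
      intro α
      exact map_ker_isMaximal (ideal_le_ker_of_mem_Bx F β α.2)
    let Φfun : ↥(Bx F β) → MaximalSpectrum (Kring F.v F.cones β) :=
      fun α => ⟨maxIdl F.v F.cones β (α : Fin k → ℂ), hmaxIdl α⟩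
    have hbij : Function.Bijective Φfun := by
      constructor
      · intro α α' h
        have h2 : maxIdl F.v F.cones β (α : Fin k → ℂ) = maxIdl F.v F.cones β (α' : Fin k → ℂ) :=
          congrArg MaximalSpectrum.asIdeal h
        exact Subtype.ext (maxIdl_injOn F β α.2 α'.2 h2)
      · intro M
        obtain ⟨α, hαBx, hα⟩ := kring_maximal_classify F β M.asIdeal M.2
        refine ⟨⟨α, hαBx⟩, ?_⟩
        apply MaximalSpectrum.ext
        exact hα.symm
    refine ⟨Equiv.ofBijective Φfun hbij, fun α => rfl⟩

end GKZpaper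
end
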